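/- Let G be a graph, u ∈ V(G), and A ⊆ V(G − u). Suppose there exist k independent paths in G from u to distinct vertices a_1, …, a_k ∈ A, respectively, each otherwise disjoint from A (i.e., meeting A only in its endpoint in A). Then for any n ≥ k, if there exist n independent paths P_1, …, P_n in G from u to n distinct vertices of A, each otherwise disjoint from A, then P_1, …, P_n may be chosen so that a_i ∈ V(P_i) for all i ∈ [k]. -/

import Mathlib

/-!
Take, among all fans of `n` paths from `u` into `A`, one that minimises lexicographically the
number of ends `aᵢ` it misses and then the number of its edges outside the paths `Pᵢ`. Suppose
it misses `aᵢ`, and let `x` be the last vertex of `Pᵢ` on the fan. Reroute a path `Q` through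
`x` along `Pᵢ` to `aᵢ`; at `x = u`, choose `Q` ending outside `{a₁, …, a_k}`, which exists by
counting. If `Q` ended outside `{a₁, …, a_k}`, fewer ends are missed. Otherwise `x ≠ u`, no
more ends are missed, and the discarded tail of `Q` has an edge outside the `Pⱼ`: a walk along
edges of the `Pⱼ` avoiding `u` never leaves the path it starts on, and the end of `Q` is not on
`Pᵢ`. Either way the minimality is contradicted. A fan missing no `aᵢ` is then renumbered
so that `aᵢ` ends its `i`-th path.
-/

open SimpleGraph

section CommonDefs

variable {V : Type*}

/-- The spanning subgraph of `G` keeping only edges with both ends in `W`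
(vertices outside `W` become isolated). Walks in `gOn G W` between vertices of `W`
are exactly walks in the subgraph of `G` induced by `W`. -/
def gOn (G : SimpleGraph V) (W : Set V) : SimpleGraph V where
  Adj u v := G.Adj u v ∧ u ∈ W ∧ v ∈ W
  symm := ⟨fun _ _ h => ⟨h.1.symm, h.2.2, h.2.1⟩⟩
  loopless := ⟨fun u h => h.1.ne rfl⟩

/-- `G` is `k`-connected: more than `k` vertices, and deleting fewer than `k`
vertices leaves a connected graph. -/
def KConnected (k : ℕ) (G : SimpleGraph V) : Prop :=
  k < Nat.card V ∧ ∀ S : Set V, S.ncard < k → (G.induce Sᶜ).Connected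

/-- A drawing (embedding) of the graph `G` inside the region `D ⊆ ℝ²` with no
crossing edges: vertices are distinct points of `D`, every edge is an injective
arc in `D` between the images of its ends, arcs do not pass through images of
other vertices, and two arcs of distinct edges meet only in images of common
endvertices. -/
def GoodDrawing (G : SimpleGraph V) (D : Set (ℝ × ℝ)) (f : V → ℝ × ℝ) : Prop :=
  Function.Injective f ∧ (∀ v, f v ∈ D) ∧
  ∃ γ : ∀ u v : V, G.Adj u v → _root_.Path (f u) (f v),
    (∀ u v (h : G.Adj u v), Function.Injective fun t => (γ u v h) t) ∧
    (∀ u v (h : G.Adj u v) (t : unitInterval), (γ u v h) t ∈ D) ∧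
    (∀ u v (h : G.Adj u v),
      (Set.range fun t => (γ v u h.symm) t) = Set.range fun t => (γ u v h) t) ∧
    (∀ u v (h : G.Adj u v) (w : V), w ≠ u → w ≠ v →
      f w ∉ Set.range fun t => (γ u v h) t) ∧
    (∀ u v u' v' (h : G.Adj u v) (h' : G.Adj u' v'), s(u, v) ≠ s(u', v') →
      ∀ x : ℝ × ℝ, (x ∈ Set.range fun t => (γ u v h) t) →
        (x ∈ Set.range fun t => (γ u' v' h') t) →
          ∃ w : V, (w = u ∨ w = v) ∧ (w = u' ∨ w = v') ∧ x = f w)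

/-- `G` is a planar graph: it can be drawn in the plane with no crossing edges. -/
def PlanarGraph (G : SimpleGraph V) : Prop := ∃ f, GoodDrawing G Set.univ f

/-- The closed unit disc in the plane. -/
def unitDisc : Set (ℝ × ℝ) := {p | p.1 ^ 2 + p.2 ^ 2 ≤ 1}

/-- The boundary circle of the closed unit disc. -/
def unitCircleSet : Set (ℝ × ℝ) := {p | p.1 ^ 2 + p.2 ^ 2 = 1}

/-- The point of the unit circle with angle `θ`. -/
noncomputable def circlePt (θ : ℝ) : ℝ × ℝ := (Real.cos θ, Real.sin θ)

/-- `(G, A)` is planar: `G` can be drawn in a closed disc with no crossing edges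
so that all the vertices of `A` lie on the boundary of the disc (equivalently,
`G` has a planar drawing with `A` on the unbounded face). -/
def PlanarInDiscWithBoundary (G : SimpleGraph V) (A : Set V) : Prop :=
  ∃ f, GoodDrawing G unitDisc f ∧ ∀ v ∈ A, f v ∈ unitCircleSet

/-- `(G, b 0, …, b (n-1))` is planar: `G` can be drawn in a closed disc with no
crossing edges so that `b 0, …, b (n-1)` occur on the boundary of the disc in
this cyclic order. -/
def PlanarCyclic {n : ℕ} (G : SimpleGraph V) (b : Fin n → V) : Prop :=
  ∃ f, GoodDrawing G unitDisc f ∧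
    ∃ θ : Fin n → ℝ, StrictMono θ ∧ (∀ i j, θ i < θ j + 2 * Real.pi) ∧
      ∀ i, f (b i) = circlePt (θ i)

/-- `b 0, …, b 4` are the branch vertices of a `TK₅` (a subdivision of `K₅`)
contained in `G`: between any two branch vertices there is a path, the paths are
pairwise internally disjoint, and no branch vertex is internal on any path. -/
def IsTK5With (G : SimpleGraph V) (b : Fin 5 → V) : Prop :=
  Function.Injective b ∧
  ∃ P : ∀ i j : Fin 5, G.Walk (b i) (b j),
    (∀ i j : Fin 5, i < j → (P i j).IsPath) ∧
    (∀ i j : Fin 5, i < j → ∀ k : Fin 5, b k ∈ (P i j).support → k = i ∨ k = j) ∧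
    (∀ i j i' j' : Fin 5, i < j → i' < j' → (i, j) ≠ (i', j') →
      ∀ v : V, v ∈ (P i j).support → v ∈ (P i' j').support →
        (v = b i ∨ v = b j) ∧ (v = b i' ∨ v = b j'))

/-- `G` contains a subdivision of `K₅`. -/
def ContainsTK5 (G : SimpleGraph V) : Prop := ∃ b, IsTK5With G b

/-- `G` contains a subdivision of `K₅` in which `y` is not a branch vertex. -/
def ContainsTK5Avoiding (G : SimpleGraph V) (y : V) : Prop :=
  ∃ b, IsTK5With G b ∧ ∀ i, b i ≠ y

/-- `G` contains `K₄⁻` (`K₄` minus an edge) as a subgraph. -/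
def ContainsK4minus (G : SimpleGraph V) : Prop :=
  ∃ a b c d : V, a ≠ b ∧ a ≠ c ∧ a ≠ d ∧ b ≠ c ∧ b ≠ d ∧ c ≠ d ∧
    G.Adj a b ∧ G.Adj a c ∧ G.Adj a d ∧ G.Adj b c ∧ G.Adj b d

/-- The induced subgraph of `G` on `{x1, x2, y1, y2}` is isomorphic to `K₄⁻`,
with `y1 y2` the missing edge. -/
def K4minusAt (G : SimpleGraph V) (x1 x2 y1 y2 : V) : Prop :=
  x1 ≠ x2 ∧ x1 ≠ y1 ∧ x1 ≠ y2 ∧ x2 ≠ y1 ∧ x2 ≠ y2 ∧ y1 ≠ y2 ∧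
  G.Adj x1 x2 ∧ G.Adj x1 y1 ∧ G.Adj x1 y2 ∧ G.Adj x2 y1 ∧ G.Adj x2 y2 ∧
  ¬ G.Adj y1 y2

/-- `G − {yv : v ∉ S}`: delete from `G` all edges at `y` except those to `S`. -/
def removeEdgesAt (G : SimpleGraph V) (y : V) (S : Set V) : SimpleGraph V :=
  G.deleteEdges {e | ∃ v : V, v ∉ S ∧ e = s(y, v)}

/-- `(G1, G2)` is a `k`-separation of `G`: `G1, G2` are edge-disjoint subgraphs
whose union is `G`, neither vertex set contains the other, and they share
exactly `k` vertices. -/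
def IsSep (G : SimpleGraph V) (k : ℕ) (G1 G2 : G.Subgraph) : Prop :=
  G1 ⊔ G2 = ⊤ ∧ Disjoint G1.edgeSet G2.edgeSet ∧
  (G1.verts \ G2.verts).Nonempty ∧ (G2.verts \ G1.verts).Nonempty ∧
  (G1.verts ∩ G2.verts).ncard = k

/-- `G2` is exactly the graph obtained from the edge-disjoint union of the
8-cycle `a₁b₁a₂b₂a₃b₃a₄b₄a₁` and the 4-cycle `b₁b₂b₃b₄b₁` by adding the vertex
`a` and the edges `a bᵢ` for `i ∈ [4]`. -/
def SpecialG2 (G : SimpleGraph V) (a : V) (G2 : G.Subgraph) (av bv : Fin 4 → V) : Prop :=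
  Function.Injective av ∧ Function.Injective bv ∧ (∀ i j, av i ≠ bv j) ∧
  (∀ i, a ≠ av i) ∧ (∀ i, a ≠ bv i) ∧
  G2.verts = insert a (Set.range av ∪ Set.range bv) ∧
  ∀ u v : V, G2.Adj u v ↔
    ((∃ i : Fin 4, ({u, v} : Set V) = {av i, bv i}) ∨
     (∃ i : Fin 4, ({u, v} : Set V) = {bv i, av (i + 1)}) ∨
     (∃ i : Fin 4, ({u, v} : Set V) = {bv i, bv (i + 1)}) ∨
     (∃ i : Fin 4, ({u, v} : Set V) = {a, bv i}))

/-- `G` has a 5-separation `(G1, G2)` with `V(G1 ∩ G2) = {a, a₁, a₂, a₃, a₄}`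
where `G2` is the special graph of `SpecialG2`. -/
def HasSpecialSep (G : SimpleGraph V) (a : V) : Prop :=
  ∃ (G1 G2 : G.Subgraph) (av bv : Fin 4 → V),
    IsSep G 5 G1 G2 ∧ G1.verts ∩ G2.verts = insert a (Set.range av) ∧
    SpecialG2 G a G2 av bv

/-- `w` is an induced path: a path such that every edge of the ambient graph
between vertices of `w` is an edge of `w`. -/
def IsInducedPath {H : SimpleGraph V} {a b : V} (w : H.Walk a b) : Prop :=
  w.IsPath ∧ ∀ u v : V, u ∈ w.support → v ∈ w.support → H.Adj u v → s(u, v) ∈ w.edges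

/-- The neighbourhood `N(A)` of a set `A` of vertices. -/
def nbhdSet (G : SimpleGraph V) (A : Set V) : Set V :=
  {v | v ∉ A ∧ ∃ a ∈ A, G.Adj v a}

/-- The graph `p(G, 𝒜)` obtained from `G` by deleting each member of `𝒜` and
adding edges joining every pair of distinct vertices in its neighbourhood. -/
def reducedGraph (G : SimpleGraph V) (𝒜 : Set (Set V)) : SimpleGraph V where
  Adj u v := u ≠ v ∧ u ∉ ⋃₀ 𝒜 ∧ v ∉ ⋃₀ 𝒜 ∧
    (G.Adj u v ∨ ∃ A ∈ 𝒜, u ∈ nbhdSet G A ∧ v ∈ nbhdSet G A)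
  symm := by
    constructor
    rintro u v ⟨h1, h2, h3, h4⟩
    refine ⟨h1.symm, h3, h2, ?_⟩
    rcases h4 with h | ⟨A, hA, hu, hv⟩
    · exact Or.inl h.symm
    · exact Or.inr ⟨A, hA, hv, hu⟩
  loopless := ⟨fun _ h => h.1 rfl⟩

/-- `(G, 𝒜, b 0, …, b (n-1))` is 3-planar. -/
def IsThreePlanar {n : ℕ} (G : SimpleGraph V) (𝒜 : Set (Set V)) (b : Fin n → V) : Prop :=
  (∀ A ∈ 𝒜, ∀ B ∈ 𝒜, A ≠ B → Disjoint A B) ∧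
  (∀ A ∈ 𝒜, ∀ B ∈ 𝒜, A ≠ B → ∀ v ∈ nbhdSet G A, v ∉ B) ∧
  (∀ A ∈ 𝒜, (nbhdSet G A).Finite ∧ (nbhdSet G A).ncard ≤ 3) ∧
  (∀ i, ∀ A ∈ 𝒜, b i ∉ A) ∧
  PlanarCyclic (reducedGraph G 𝒜) b

/-- `S` is a cut of `G`: deleting `S` disconnects `G`. -/
def IsVertexCut (G : SimpleGraph V) (S : Set V) : Prop :=
  ∃ u ∈ Sᶜ, ∃ v ∈ Sᶜ, ¬ (gOn G Sᶜ).Reachable u v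

/-- `D` is a union of components of `G − S`. -/
def UnionOfComps (G : SimpleGraph V) (S : Set V) (D : Set V) : Prop :=
  D ⊆ Sᶜ ∧ ∀ u ∈ D, ∀ v ∈ Sᶜ, (gOn G Sᶜ).Reachable u v → v ∈ D

/-- `G` is `(k, A)`-connected: for any cut `T` of `G` with `|T| < k`, every
component of `G − T` contains a vertex of `A`. -/
def IsKAConnected (G : SimpleGraph V) (k : ℕ) (A : Set V) : Prop :=
  ∀ T : Set V, T.ncard < k → IsVertexCut G T →
    ∀ v ∈ Tᶜ, ∃ a ∈ A, a ∈ Tᶜ ∧ (gOn G Tᶜ).Reachable v a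

/-- Any two vertices of `B` are joined by a walk of `G` inside `B`. -/
def PreconnOn (G : SimpleGraph V) (B : Set V) : Prop :=
  ∀ u ∈ B, ∀ v ∈ B, (gOn G B).Reachable u v

/-- The subgraph of `G` induced by `B` is connected. -/
def ConnOn (G : SimpleGraph V) (B : Set V) : Prop := B.Nonempty ∧ PreconnOn G B

/-- The subgraph of `G` induced by `B` has no cut vertex. -/
def NoCutVertexOn (G : SimpleGraph V) (B : Set V) : Prop :=
  ∀ v ∈ B, PreconnOn G (B \ {v})

/-- `B` is (the vertex set of) a block of the subgraph of `G` induced by `W`: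
a maximal set inducing a connected subgraph with no cut vertex. -/
def IsBlockOf (G : SimpleGraph V) (W : Set V) (B : Set V) : Prop :=
  B ⊆ W ∧ ConnOn G B ∧ NoCutVertexOn G B ∧
  ∀ B' : Set V, B ⊆ B' → B' ⊆ W → ConnOn G B' → NoCutVertexOn G B' → B' = B

/-- `C` is a chain of blocks of the subgraph of `G` induced by `W`, from `u` to
`v` (identified with its union, a subgraph of `G`). -/
def IsChainOfBlocks (G : SimpleGraph V) (W : Set V) (u v : V) (C : G.Subgraph) : Prop :=
  ∃ (k : ℕ) (Bs : ℕ → Set V),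
    (∀ i ≤ k, IsBlockOf G W (Bs i)) ∧
    C = ⨆ i ∈ Set.Iic k, (⊤ : G.Subgraph).induce (Bs i) ∧
    ((k = 0 ∧ u ∈ Bs 0 ∧ v ∈ Bs 0 ∧ u ≠ v) ∨
     (1 ≤ k ∧ u ∈ Bs 0 \ Bs 1 ∧ v ∈ Bs k \ Bs (k - 1) ∧
       (∀ i < k, (Bs i ∩ Bs (i + 1)).ncard = 1) ∧
       (∀ i j : ℕ, i + 2 ≤ j → j ≤ k → Bs i ∩ Bs j = ∅)))

/-- Two paths are independent: no internal vertex of either lies on the other. -/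
def IndepPair {H : SimpleGraph V} {a b c d : V} (P : H.Walk a b) (Q : H.Walk c d) : Prop :=
  (∀ v ∈ P.support, v ≠ a → v ≠ b → v ∉ Q.support) ∧
  (∀ v ∈ Q.support, v ≠ c → v ≠ d → v ∉ P.support)

end CommonDefs

theorem Equiv.Perm.exists_apply_eq_of_injective {α β : Type*} [Finite β] {f τ : α → β}
    (hf : Function.Injective f) (hτ : Function.Injective τ) :
    ∃ σ : Equiv.Perm β, ∀ i, σ (f i) = τ i := by
  classical
  refine ⟨((Equiv.ofInjective f hf).symm.trans (Equiv.ofInjective τ hτ)).extendSubtype,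
    fun i => ?_⟩
  rw [Equiv.extendSubtype_apply_of_mem _ _ (Set.mem_range_self i)]
  simp

namespace SimpleGraph

variable {V ι κ : Type*} {G : SimpleGraph V}

namespace Walk

theorem IsPath.append {a x b : V} {p : G.Walk a x} {q : G.Walk x b} (hp : p.IsPath)
    (hq : q.IsPath) (hpq : ∀ v ∈ p.support, v ∈ q.support → v = x) : (p.append q).IsPath := by
  have hq' := hq.support_nodup
  rw [← q.cons_tail_support, List.nodup_cons] at hq'
  refine IsPath.mk' ?_
  rw [support_append, List.nodup_append]
  refine ⟨hp.support_nodup, hq'.2, fun v hv w hw hvw => ?_⟩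
  subst hvw
  have hvq : v ∈ q.support := by rw [← q.cons_tail_support]; exact List.mem_cons_of_mem _ hw
  exact hq'.1 (hpq v hv hvq ▸ hw)

theorem IsPath.start_notMem_support_dropUntil [DecidableEq V] {a b x : V} {p : G.Walk a b}
    (hp : p.IsPath) (hx : x ∈ p.support) (hxa : x ≠ a) : a ∉ (p.dropUntil x hx).support := by
  have hsplit : ((p.takeUntil x hx).append (p.dropUntil x hx)).IsPath := by
    rwa [p.take_spec hx]
  exact fun ha => hsplit.ne_of_mem_support_of_append hxa.symm (start_mem_support _) ha rfl

theorem exists_eq_append_of_end_mem {a b : V} (w : G.Walk a b) {S : Set V} (hb : b ∈ S) :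
    ∃ x ∈ S, ∃ (w₁ : G.Walk a x) (w₂ : G.Walk x b), w = w₁.append w₂ ∧
      ∀ v ∈ w₁.support, v ≠ x → v ∉ S := by
  induction w with
  | nil => exact ⟨_, hb, nil, nil, rfl, by simp⟩
  | @cons c d e h p ih =>
    by_cases hc : c ∈ S
    · exact ⟨c, hc, nil, cons h p, rfl, by simp⟩
    · obtain ⟨x, hx, w₁, w₂, rfl, hw₁⟩ := ih hb
      refine ⟨x, hx, cons h w₁, w₂, rfl, fun v hv hvx => ?_⟩
      rw [support_cons, List.mem_cons] at hv
      rcases hv with rfl | hv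
      · exact hc
      · exact hw₁ v hv hvx

theorem exists_eq_append_of_start_mem {a b : V} (w : G.Walk a b) {S : Set V} (ha : a ∈ S) :
    ∃ x ∈ S, ∃ (w₁ : G.Walk a x) (w₂ : G.Walk x b), w = w₁.append w₂ ∧
      ∀ v ∈ w₂.support, v ≠ x → v ∉ S := by
  obtain ⟨x, hx, w₁, w₂, hw, hw₁⟩ := w.reverse.exists_eq_append_of_end_mem (S := S) ha
  refine ⟨x, hx, w₂.reverse, w₁.reverse, ?_, fun v hv => hw₁ v (by simpa using hv)⟩
  rw [← reverse_append, ← hw, reverse_reverse]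

end Walk

variable {u : V} {A : Set V}

/-- A `u`–`A` fan. Each path is bundled with its end, so that one path of the family can be
replaced by another with a different end using `Function.update`. -/
structure IsFan (G : SimpleGraph V) (u : V) (A : Set V) (Q : ι → Σ v, G.Walk u v) : Prop where
  injective_end : Function.Injective fun i => (Q i).1
  end_mem : ∀ i, (Q i).1 ∈ A
  isPath : ∀ i, (Q i).2.IsPath
  eq_of_mem_support : ∀ i j, i ≠ j → ∀ v ∈ (Q i).2.support, v ∈ (Q j).2.support → v = u
  eq_end_of_mem : ∀ i, ∀ v ∈ (Q i).2.support, v ∈ A → v = (Q i).1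

theorem isFan_sigma_iff {e : ι → V} {Q : ∀ i, G.Walk u (e i)} :
    IsFan G u A (fun i => ⟨e i, Q i⟩) ↔
      Function.Injective e ∧ (∀ i, e i ∈ A) ∧ (∀ i, (Q i).IsPath) ∧
      (∀ i j, i ≠ j → ∀ v, v ∈ (Q i).support → v ≠ u → v ≠ e i → v ∉ (Q j).support) ∧
      (∀ i, ∀ v ∈ (Q i).support, v ∈ A → v = e i) := by
  constructor
  · rintro ⟨hinj, hA, hpath, hdisj, hend⟩
    exact ⟨hinj, hA, hpath, fun i j hij v hi hvu _ hj => hvu (hdisj i j hij v hi hj), hend⟩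
  · rintro ⟨hinj, hA, hpath, hindep, hend⟩
    refine ⟨hinj, hA, hpath, fun i j hij v hi hj => ?_, hend⟩
    by_contra hvu
    by_cases hve : v = e i
    · subst hve
      exact hij (hinj (hend j _ hj (hA i)))
    · exact hindep i j hij v hi hvu hve hj

variable {P : κ → Σ v, G.Walk u v} {Q : ι → Σ v, G.Walk u v}

def missedEnds (P : κ → Σ v, G.Walk u v) (Q : ι → Σ v, G.Walk u v) : Set κ :=
  {i | ∀ l, (Q l).1 ≠ (P i).1}

def edgeUnion (Q : ι → Σ v, G.Walk u v) : Set (Sym2 V) := {d | ∃ l, d ∈ (Q l).2.edges}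

noncomputable def fanDefect (P : κ → Σ v, G.Walk u v) (Q : ι → Σ v, G.Walk u v) : ℕ ×ₗ ℕ :=
  toLex ((missedEnds P Q).ncard, (edgeUnion Q \ edgeUnion P).ncard)

theorem missedEnds_update_subset [DecidableEq ι] (j : ι) (i₀ : κ) (R : G.Walk u (P i₀).1) :
    missedEnds P (Function.update Q j ⟨(P i₀).1, R⟩) ⊆
      (missedEnds P Q \ {i₀}) ∪ {i | (P i).1 = (Q j).1} := by
  intro i hi
  have hii₀ : i ≠ i₀ := by
    rintro rfl
    exact hi j (by rw [Function.update_self])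
  by_cases hij : (P i).1 = (Q j).1
  · exact Or.inr hij
  refine Or.inl ⟨fun l => ?_, hii₀⟩
  rcases eq_or_ne l j with rfl | hl
  · exact Ne.symm hij
  · simpa [missedEnds, Function.update_of_ne hl] using hi l

theorem exists_forall_end_ne_of_mem_missedEnds [Fintype ι] [Fintype κ]
    (hcard : Fintype.card κ ≤ Fintype.card ι) (hQ : Function.Injective fun l => (Q l).1)
    {i₀ : κ} (hi₀ : i₀ ∈ missedEnds P Q) : ∃ j, ∀ i, (Q j).1 ≠ (P i).1 := by
  by_contra! h
  choose f hf using h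
  have hf_inj : Function.Injective f := fun l₁ l₂ h => hQ (by simp only [hf, h])
  have := Fintype.card_lt_of_injective_of_notMem f hf_inj (b := i₀)
    (by rintro ⟨l, rfl⟩; exact hi₀ l (hf l))
  omega

theorem fanDefect_update_lt_of_forall_ne [Finite κ] [DecidableEq ι] {j : ι} {i₀ : κ}
    (hi₀ : i₀ ∈ missedEnds P Q) (hj : ∀ i, (P i).1 ≠ (Q j).1) (R : G.Walk u (P i₀).1) :
    fanDefect P (Function.update Q j ⟨(P i₀).1, R⟩) < fanDefect P Q := by
  refine Prod.Lex.toLex_lt_toLex.2 (Or.inl (Set.ncard_lt_ncard ?_))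
  refine ((missedEnds_update_subset j i₀ R).trans fun i hi => ?_).trans_ssubset
    (Set.sdiff_singleton_ssubset.2 hi₀)
  exact hi.resolve_right (hj i)

namespace IsFan

theorem comp (hQ : IsFan G u A Q) {f : κ → ι} (hf : Function.Injective f) :
    IsFan G u A (Q ∘ f) where
  injective_end := hQ.injective_end.comp hf
  end_mem i := hQ.end_mem (f i)
  isPath i := hQ.isPath (f i)
  eq_of_mem_support i j hij := hQ.eq_of_mem_support (f i) (f j) (hf.ne hij)
  eq_end_of_mem i := hQ.eq_end_of_mem (f i)

theorem end_mem_support_of_walk (hP : IsFan G u A P) {x c : V} (w : G.Walk x c)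
    (hw : ∀ d ∈ w.edges, d ∈ edgeUnion P) (hu : u ∉ w.support) {i : κ}
    (hx : x ∈ (P i).2.support) : c ∈ (P i).2.support := by
  induction w with
  | nil => exact hx
  | @cons y z c h p ih =>
    obtain ⟨i', hi'⟩ := hw s(y, z) (by simp)
    obtain rfl : i' = i := by
      by_contra hne
      have hyu := hP.eq_of_mem_support i i' (Ne.symm hne) y hx
        ((P i').2.fst_mem_support_of_mem_edges hi')
      exact hu (hyu ▸ (Walk.cons h p).start_mem_support)
    exact ih (fun d hd => hw d (by simp [hd])) (by simp_all)
      ((P i').2.snd_mem_support_of_mem_edges hi')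

theorem update [DecidableEq ι] (hQ : IsFan G u A Q) (j : ι) {b : V} {R : G.Walk u b}
    (hR : R.IsPath) (hb : b ∈ A) (hRA : ∀ v ∈ R.support, v ∈ A → v = b)
    (hbQ : ∀ l ≠ j, (Q l).1 ≠ b)
    (hRQ : ∀ l ≠ j, ∀ v ∈ R.support, v ∈ (Q l).2.support → v = u) :
    IsFan G u A (Function.update Q j ⟨b, R⟩) := by
  refine ⟨fun l₁ l₂ h => ?_, fun l => ?_, fun l => ?_, fun l₁ l₂ hl v hv₁ hv₂ => ?_,
    fun l v hv hvA => ?_⟩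
  · beta_reduce at h
    by_cases h₁ : l₁ = j <;> by_cases h₂ : l₂ = j
    · exact h₁.trans h₂.symm
    · subst h₁
      rw [Function.update_self, Function.update_of_ne h₂] at h
      exact absurd h.symm (hbQ l₂ h₂)
    · subst h₂
      rw [Function.update_self, Function.update_of_ne h₁] at h
      exact absurd h (hbQ l₁ h₁)
    · rw [Function.update_of_ne h₁, Function.update_of_ne h₂] at h
      exact hQ.injective_end h
  · rcases eq_or_ne l j with rfl | hl
    · rw [Function.update_self]; exact hb
    · rw [Function.update_of_ne hl]; exact hQ.end_mem l
  · rcases eq_or_ne l j with rfl | hl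
    · rw [Function.update_self]; exact hR
    · rw [Function.update_of_ne hl]; exact hQ.isPath l
  · by_cases h₁ : l₁ = j <;> by_cases h₂ : l₂ = j
    · exact absurd (h₁.trans h₂.symm) hl
    · subst h₁
      rw [Function.update_self] at hv₁
      rw [Function.update_of_ne h₂] at hv₂
      exact hRQ l₂ h₂ v hv₁ hv₂
    · subst h₂
      rw [Function.update_self] at hv₂
      rw [Function.update_of_ne h₁] at hv₁
      exact hRQ l₁ h₁ v hv₂ hv₁
    · rw [Function.update_of_ne h₁] at hv₁
      rw [Function.update_of_ne h₂] at hv₂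
      exact hQ.eq_of_mem_support l₁ l₂ hl v hv₁ hv₂
  · rcases eq_or_ne l j with rfl | hl
    · rw [Function.update_self] at hv ⊢
      exact hRA v hv hvA
    · rw [Function.update_of_ne hl] at hv ⊢
      exact hQ.eq_end_of_mem l v hv hvA

theorem update_append [DecidableEq V] [DecidableEq ι] (hQ : IsFan G u A Q) {j : ι} {x b : V}
    (hx : x ∈ (Q j).2.support) (hxA : x ∉ A) {w : G.Walk x b} (hw : w.IsPath)
    (hwQ : ∀ v ∈ w.support, v ≠ x → ∀ l, v ∉ (Q l).2.support)
    (hwA : ∀ v ∈ w.support, v ∈ A → v = b) (hb : b ∈ A) :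
    IsFan G u A (Function.update Q j ⟨b, ((Q j).2.takeUntil x hx).append w⟩) := by
  set pre := (Q j).2.takeUntil x hx
  have hpre : ∀ v ∈ pre.support, v ∈ (Q j).2.support :=
    fun v hv => (Q j).2.support_takeUntil_subset_support hx hv
  have hpreA : ∀ v ∈ pre.support, v ∉ A := by
    intro v hv hvA
    have hsplit : (pre.append ((Q j).2.dropUntil x hx)).IsPath := by
      rw [(Q j).2.take_spec hx]; exact hQ.isPath j
    exact hsplit.ne_of_mem_support_of_append (fun h => hxA (h ▸ hQ.end_mem j)) hv
      (Walk.end_mem_support _) (hQ.eq_end_of_mem j v (hpre v hv) hvA)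
  refine hQ.update j (((hQ.isPath j).takeUntil hx).append hw fun v hv hvw => ?_) hb
    (fun v hv hvA => ?_) (fun l _ h => ?_) (fun l hl v hv hvl => ?_)
  · by_contra hvx
    exact hwQ v hvw hvx j (hpre v hv)
  · rcases Walk.mem_support_append_iff pre w |>.1 hv with hv | hv
    · exact absurd hvA (hpreA v hv)
    · exact hwA v hv hvA
  · exact hwQ b w.end_mem_support (fun h' => hxA (h' ▸ hb)) l (h ▸ (Q l).2.end_mem_support)
  · rcases Walk.mem_support_append_iff pre w |>.1 hv with hv | hv
    · exact hQ.eq_of_mem_support j l hl.symm v (hpre v hv) hvl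
    · by_cases hvx : v = x
      · exact hQ.eq_of_mem_support j l hl.symm v (hvx ▸ hx) hvl
      · exact absurd hvl (hwQ v hv hvx l)

theorem edgeUnion_update_append_diff_ssubset [DecidableEq V] [DecidableEq ι]
    (hQ : IsFan G u A Q) {j : ι} {x b : V} (hx : x ∈ (Q j).2.support) (hxu : x ≠ u)
    {w : G.Walk x b} (hwP : ∀ d ∈ w.edges, d ∈ edgeUnion P) {d : Sym2 V}
    (hd : d ∈ ((Q j).2.dropUntil x hx).edges) (hdP : d ∉ edgeUnion P) :
    edgeUnion (Function.update Q j ⟨b, ((Q j).2.takeUntil x hx).append w⟩) \ edgeUnion P ⊂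
      edgeUnion Q \ edgeUnion P := by
  rw [Set.ssubset_iff_of_subset]
  · refine ⟨d, ⟨⟨j, (Q j).2.edges_dropUntil_subset_edges hx hd⟩, hdP⟩, ?_⟩
    rintro ⟨⟨l, hl⟩, -⟩
    rcases eq_or_ne l j with rfl | hlj
    · rw [Function.update_self, Walk.edges_append, List.mem_append] at hl
      rcases hl with hl | hl
      · exact (hQ.isPath l).isTrail.disjoint_edges_takeUntil_dropUntil hx hl hd
      · exact hdP (hwP d hl)
    · rw [Function.update_of_ne hlj] at hl
      induction d using Sym2.ind with
      | _ v v' =>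
      have hv := Walk.fst_mem_support_of_mem_edges _ hd
      have hvu := hQ.eq_of_mem_support j l hlj.symm v
        ((Q j).2.support_dropUntil_subset_support hx hv) ((Q l).2.fst_mem_support_of_mem_edges hl)
      exact (hQ.isPath j).start_notMem_support_dropUntil hx hxu (hvu ▸ hv)
  · rintro d' ⟨⟨l, hl⟩, hd'P⟩
    refine ⟨?_, hd'P⟩
    rcases eq_or_ne l j with rfl | hlj
    · rw [Function.update_self, Walk.edges_append, List.mem_append] at hl
      rcases hl with hl | hl
      · exact ⟨l, (Q l).2.edges_takeUntil_subset_edges hx hl⟩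
      · exact absurd (hwP d' hl) hd'P
    · rw [Function.update_of_ne hlj] at hl
      exact ⟨l, hl⟩

theorem fanDefect_update_append_lt [Finite V] [Finite κ] [DecidableEq V] [DecidableEq ι]
    (hP : Function.Injective fun i => (P i).1) (hQ : IsFan G u A Q) {j : ι} {i₀ i₁ : κ}
    (hi₀ : i₀ ∈ missedEnds P Q) (hi₁ : (P i₁).1 = (Q j).1) {x : V} (hx : x ∈ (Q j).2.support)
    (hxu : x ≠ u) {w : G.Walk x (P i₀).1} (hwP : ∀ d ∈ w.edges, d ∈ edgeUnion P) {d : Sym2 V}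
    (hd : d ∈ ((Q j).2.dropUntil x hx).edges) (hdP : d ∉ edgeUnion P) :
    fanDefect P (Function.update Q j ⟨(P i₀).1, ((Q j).2.takeUntil x hx).append w⟩) <
      fanDefect P Q := by
  refine Prod.Lex.toLex_lt_toLex'.2 ⟨?_, fun _ => Set.ncard_lt_ncard
    (hQ.edgeUnion_update_append_diff_ssubset hx hxu hwP hd hdP)⟩
  have hsub : missedEnds P (Function.update Q j ⟨(P i₀).1, ((Q j).2.takeUntil x hx).append w⟩) ⊆
      insert i₁ (missedEnds P Q \ {i₀}) := fun i hi =>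
    (missedEnds_update_subset j i₀ _ hi).elim Or.inr fun hi => Or.inl (hP (hi.trans hi₁.symm))
  calc _ ≤ (insert i₁ (missedEnds P Q \ {i₀})).ncard := Set.ncard_le_ncard hsub
    _ ≤ (missedEnds P Q \ {i₀}).ncard + 1 := Set.ncard_insert_le _ _
    _ = (missedEnds P Q).ncard := Set.ncard_sdiff_singleton_add_one hi₀

theorem exists_isFan_fanDefect_lt [Finite V] [Fintype ι] [Fintype κ] (hP : IsFan G u A P)
    (hcard : Fintype.card κ ≤ Fintype.card ι) (hQ : IsFan G u A Q) {i₀ : κ}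
    (hi₀ : i₀ ∈ missedEnds P Q) :
    ∃ Q' : ι → Σ v, G.Walk u v, IsFan G u A Q' ∧ fanDefect P Q' < fanDefect P Q := by
  classical
  obtain ⟨j₀, hj₀⟩ := exists_forall_end_ne_of_mem_missedEnds hcard hQ.injective_end hi₀
  obtain ⟨x, ⟨j', hxj'⟩, _, w, hPw, hwQ⟩ := (P i₀).2.exists_eq_append_of_start_mem
    (S := {v | ∃ l, v ∈ (Q l).2.support}) ⟨j₀, Walk.start_mem_support _⟩
  have hw : w.IsPath := (hPw ▸ hP.isPath i₀).of_append_right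
  have hwP : ∀ v ∈ w.support, v ∈ (P i₀).2.support := fun v hv => by
    rw [hPw]; exact (Walk.mem_support_append_iff _ _).2 (Or.inr hv)
  have hwE : ∀ d ∈ w.edges, d ∈ edgeUnion P := fun d hd =>
    ⟨i₀, by rw [hPw, Walk.edges_append]; exact List.mem_append_right _ hd⟩
  have hxP := hwP x w.start_mem_support
  have hxA : x ∉ A := fun hxA => hi₀ j'
    ((hQ.eq_end_of_mem j' x hxj' hxA).symm.trans (hP.eq_end_of_mem i₀ x hxP hxA))
  obtain ⟨j, hxj, hju⟩ : ∃ j, x ∈ (Q j).2.support ∧ (x = u → ∀ i, (Q j).1 ≠ (P i).1) := by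
    by_cases hxu : x = u
    · exact ⟨j₀, hxu ▸ (Q j₀).2.start_mem_support, fun _ => hj₀⟩
    · exact ⟨j', hxj', fun h => absurd h hxu⟩
  refine ⟨_, hQ.update_append hxj hxA hw (fun v hv hvx l hvl => hwQ v hv hvx ⟨l, hvl⟩)
    (fun v hv => hP.eq_end_of_mem i₀ v (hwP v hv)) (hP.end_mem i₀), ?_⟩
  by_cases hj : ∀ i, (P i).1 ≠ (Q j).1
  · exact fanDefect_update_lt_of_forall_ne hi₀ hj _
  obtain ⟨i₁, hi₁⟩ := not_forall_not.1 hj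
  have hxu : x ≠ u := fun h => hju h i₁ hi₁.symm
  obtain ⟨d, hd, hdP⟩ : ∃ d ∈ ((Q j).2.dropUntil x hxj).edges, d ∉ edgeUnion P := by
    by_contra! h
    have hend := hP.end_mem_support_of_walk _ h
      ((hQ.isPath j).start_notMem_support_dropUntil hxj hxu) hxP
    exact hi₀ j (hP.eq_end_of_mem i₀ _ hend (hQ.end_mem j))
  exact fanDefect_update_append_lt hP.injective_end hQ hi₀ hi₁ hxj hxu hwE hd hdP

theorem exists_isFan_forall_exists_end_eq [Finite V] [Fintype ι] [Fintype κ]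
    (hP : IsFan G u A P) (hcard : Fintype.card κ ≤ Fintype.card ι) (hQ : IsFan G u A Q) :
    ∃ Q' : ι → Σ v, G.Walk u v, IsFan G u A Q' ∧ ∀ i, ∃ l, (Q' l).1 = (P i).1 := by
  obtain ⟨Q', hQ', hmin⟩ := (InvImage.wf (fanDefect P) wellFounded_lt).has_min
    {Q' | IsFan G u A Q'} ⟨Q, hQ⟩
  refine ⟨Q', hQ', fun i => ?_⟩
  by_contra! hi
  obtain ⟨Q'', hQ'', hlt⟩ := hP.exists_isFan_fanDefect_lt hcard hQ' (i₀ := i) hi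
  exact hmin Q'' hQ'' hlt

end IsFan

end SimpleGraph

theorem statement7_general {V : Type*} [Fintype V] (G : SimpleGraph V)
    (u : V) (A : Set V)
    (k n : ℕ) (hkn : k ≤ n)
    (a : Fin k → V) (hainj : Function.Injective a) (haA : ∀ i, a i ∈ A)
    (hk : ∃ P : ∀ i : Fin k, G.Walk u (a i),
      (∀ i, (P i).IsPath) ∧
      (∀ i j, i ≠ j → ∀ v, v ∈ (P i).support → v ≠ u → v ≠ a i → v ∉ (P j).support) ∧
      (∀ i, ∀ v ∈ (P i).support, v ∈ A → v = a i))
    (hn : ∃ (e : Fin n → V) (Q : ∀ i : Fin n, G.Walk u (e i)),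
      Function.Injective e ∧ (∀ i, e i ∈ A) ∧ (∀ i, (Q i).IsPath) ∧
      (∀ i j, i ≠ j → ∀ v, v ∈ (Q i).support → v ≠ u → v ≠ e i → v ∉ (Q j).support) ∧
      (∀ i, ∀ v ∈ (Q i).support, v ∈ A → v = e i)) :
    ∃ (e : Fin n → V) (Q : ∀ i : Fin n, G.Walk u (e i)),
      Function.Injective e ∧ (∀ i, e i ∈ A) ∧ (∀ i, (Q i).IsPath) ∧
      (∀ i j, i ≠ j → ∀ v, v ∈ (Q i).support → v ≠ u → v ≠ e i → v ∉ (Q j).support) ∧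
      (∀ i, ∀ v ∈ (Q i).support, v ∈ A → v = e i) ∧
      (∀ i : Fin k, a i ∈ (Q (Fin.castLE hkn i)).support) := by
  obtain ⟨P, hP⟩ := hk
  obtain ⟨e, Q, hQ⟩ := hn
  have hPfan : IsFan G u A fun i => ⟨a i, P i⟩ := isFan_sigma_iff.2 ⟨hainj, haA, hP⟩
  obtain ⟨R, hR, hcover⟩ :=
    hPfan.exists_isFan_forall_exists_end_eq (by simpa using hkn) (isFan_sigma_iff.2 hQ)
  choose τ hτ using hcover
  obtain ⟨σ, hσ⟩ := Equiv.Perm.exists_apply_eq_of_injective (Fin.castLE_injective hkn)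
    (fun i₁ i₂ h => hainj ((hτ i₁).symm.trans ((congrArg (fun l => (R l).1) h).trans (hτ i₂))))
  obtain ⟨h₁, h₂, h₃, h₄, h₅⟩ := (isFan_sigma_iff (e := fun l => (R (σ l)).1)
    (Q := fun l => (R (σ l)).2)).1 (hR.comp σ.injective)
  refine ⟨_, _, h₁, h₂, h₃, h₄, h₅, fun i => ?_⟩
  show a i ∈ (R (σ (Fin.castLE hkn i))).2.support
  rw [hσ]
  have hτi : (R (τ i)).1 = a i := hτ i
  rw [← hτi]
  exact (R (τ i)).2.end_mem_support

/-- **Perfect's theorem on independent paths.** Let `u ∈ V(G)` and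
`A ⊆ V(G − u)`. Suppose there are `k` independent paths from `u` to distinct
vertices `a 0, …, a (k-1)` of `A`, otherwise disjoint from `A`. Then for any
`n ≥ k`, if there exist `n` independent paths in `G` from `u` to `n` distinct
vertices of `A`, otherwise disjoint from `A`, then such a family may be chosen
so that `a i` lies on the `i`-th path for each `i < k`. -/
theorem statement7 {V : Type*} [Fintype V] (G : SimpleGraph V)
    (u : V) (A : Set V) (hu : u ∉ A)
    (k n : ℕ) (hkn : k ≤ n)
    (a : Fin k → V) (hainj : Function.Injective a) (haA : ∀ i, a i ∈ A)
    (hk : ∃ P : ∀ i : Fin k, G.Walk u (a i),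
      (∀ i, (P i).IsPath) ∧
      (∀ i j, i ≠ j → ∀ v, v ∈ (P i).support → v ≠ u → v ≠ a i → v ∉ (P j).support) ∧
      (∀ i, ∀ v ∈ (P i).support, v ∈ A → v = a i))
    (hn : ∃ (e : Fin n → V) (Q : ∀ i : Fin n, G.Walk u (e i)),
      Function.Injective e ∧ (∀ i, e i ∈ A) ∧ (∀ i, (Q i).IsPath) ∧
      (∀ i j, i ≠ j → ∀ v, v ∈ (Q i).support → v ≠ u → v ≠ e i → v ∉ (Q j).support) ∧
      (∀ i, ∀ v ∈ (Q i).support, v ∈ A → v = e i)) :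
    ∃ (e : Fin n → V) (Q : ∀ i : Fin n, G.Walk u (e i)),
      Function.Injective e ∧ (∀ i, e i ∈ A) ∧ (∀ i, (Q i).IsPath) ∧
      (∀ i j, i ≠ j → ∀ v, v ∈ (Q i).support → v ≠ u → v ≠ e i → v ∉ (Q j).support) ∧
      (∀ i, ∀ v ∈ (Q i).support, v ∈ A → v = e i) ∧
      (∀ i : Fin k, a i ∈ (Q (Fin.castLE hkn i)).support) :=
  statement7_general G u A k n hkn a hainj haA hk hn
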